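/- arXiv:2412.10845 — 2 statements merged into one kernel-verified Lean document; each statement's English description precedes it below -/
import Mathlib

section
/- Let g be a nonnegative function on the Hamming cube Ω₂ⁿ. Then 𝔼[g²(log g² − log 𝔼g²)] ≤ 2·‖g‖²_{L²logL}. -/
/-!
Both sides are homogeneous of degree two in `g`, so it suffices to show `Ent(h²) ≤ 2` whenever
`𝔼 ψ₂(h) ≤ 1`, and then let `λ` decrease to `‖g‖_{L² log L}` in `h = g / λ`. Writing
`Ent(h²) = 𝔼[h² log h²] - B log B` with `B = 𝔼h²`, the first term is at most `𝔼 ψ₂(h) ≤ 1`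
because `log t² ≤ log(e + t²)`, and `-B log B ≤ 1 - B ≤ 1`.
-/


/-- The Hamming cube `Ω₂ⁿ = {-1,1}ⁿ`, encoded as `Fin n → Bool`. -/
abbrev Cube (n : ℕ) : Type := Fin n → Bool

/-- The sign `±1` associated to a Boolean coordinate. -/
def sgn (b : Bool) : ℝ := if b then 1 else -1

/-- Expectation with respect to the uniform probability measure on the Hamming cube. -/
noncomputable def expect {n : ℕ} (f : Cube n → ℝ) : ℝ :=
  (∑ x : Cube n, f x) / 2 ^ n

/-- The `i`-th discrete derivative `D_i f(x) = (f(x) - f(σ_i x))/2`, where `σ_i`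
flips the `i`-th coordinate. -/
noncomputable def Di {n : ℕ} {E : Type*} [AddCommGroup E] [Module ℝ E]
    (f : Cube n → E) (i : Fin n) (x : Cube n) : E :=
  ((2 : ℝ)⁻¹) • (f x - f (Function.update x i (!x i)))

/-- `ψ₂(t) = t²·log(e + t²)`, the Young function of the Orlicz space `L² log L`. -/
noncomputable def psi2 (t : ℝ) : ℝ := t ^ 2 * Real.log (Real.exp 1 + t ^ 2)

/-- The Orlicz norm `‖g‖_{L² log L} = inf {λ > 0 : 𝔼 ψ₂(g/λ) ≤ 1}`. -/
noncomputable def orliczNorm {n : ℕ} (g : Cube n → ℝ) : ℝ :=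
  sInf {lam : ℝ | 0 < lam ∧ expect (fun x => psi2 (g x / lam)) ≤ 1}

open Filter Topology

noncomputable def entropy {n : ℕ} (f : Cube n → ℝ) : ℝ :=
  expect (fun x => f x * (Real.log (f x) - Real.log (expect f)))

section Expect

variable {n : ℕ}

lemma expect_mono {f h : Cube n → ℝ} (hfh : ∀ x, f x ≤ h x) : expect f ≤ expect h := by
  unfold expect
  gcongr with x
  exact hfh x

lemma expect_const_mul (c : ℝ) (f : Cube n → ℝ) :
    expect (fun x => c * f x) = c * expect f := by
  simp [expect, ← Finset.mul_sum, mul_div_assoc]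

lemma expect_mul_const (f : Cube n → ℝ) (c : ℝ) :
    expect (fun x => f x * c) = expect f * c := by
  simp [expect, ← Finset.sum_mul, div_mul_eq_mul_div]

lemma expect_add (f h : Cube n → ℝ) :
    expect (fun x => f x + h x) = expect f + expect h := by
  simp [expect, Finset.sum_add_distrib, add_div]

lemma expect_sub (f h : Cube n → ℝ) :
    expect (fun x => f x - h x) = expect f - expect h := by
  simp [expect, Finset.sum_sub_distrib, sub_div]

lemma tendsto_expect {ι : Type*} {l : Filter ι} {F : ι → Cube n → ℝ} {f : Cube n → ℝ}
    (hF : ∀ x, Tendsto (fun i => F i x) l (𝓝 (f x))) :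
    Tendsto (fun i => expect (F i)) l (𝓝 (expect f)) :=
  (tendsto_finsetSum _ fun x _ => hF x).div_const _

end Expect

lemma mul_mul_log_mul {c : ℝ} (hc : c ≠ 0) (t : ℝ) :
    c * t * Real.log (c * t) = c * t * Real.log c + c * t * Real.log t := by
  rcases eq_or_ne t 0 with rfl | ht
  · simp
  · rw [Real.log_mul hc ht]
    ring

lemma sq_mul_log_sq_le_psi2 (t : ℝ) : t ^ 2 * Real.log (t ^ 2) ≤ psi2 t := by
  rcases eq_or_ne t 0 with rfl | ht
  · simp [psi2]
  · unfold psi2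
    gcongr
    linarith [Real.exp_pos 1]

lemma psi2_le_psi2_of_sq_le {s t : ℝ} (hst : s ^ 2 ≤ t ^ 2) : psi2 s ≤ psi2 t := by
  unfold psi2
  gcongr
  exact Real.log_nonneg (by linarith [Real.add_one_le_exp 1, sq_nonneg s])

lemma continuous_psi2 : Continuous psi2 := by
  unfold psi2
  exact (continuous_pow 2).mul ((by fun_prop : Continuous fun t : ℝ => Real.exp 1 + t ^ 2).log
    fun t => by positivity)

section Entropy

variable {n : ℕ}

lemma entropy_eq_sub (f : Cube n → ℝ) :
    entropy f = expect (fun x => f x * Real.log (f x)) - expect f * Real.log (expect f) := by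
  simp only [entropy, mul_sub, expect_sub, expect_mul_const]

lemma entropy_const_mul {c : ℝ} (hc : c ≠ 0) (f : Cube n → ℝ) :
    entropy (fun x => c * f x) = c * entropy f := by
  have hsplit : expect (fun x => c * f x * Real.log (c * f x)) =
      c * expect f * Real.log c + c * expect (fun x => f x * Real.log (f x)) := by
    simp only [mul_mul_log_mul hc, expect_add, mul_assoc, expect_const_mul, expect_mul_const]
  rw [entropy_eq_sub, entropy_eq_sub, hsplit, expect_const_mul, mul_mul_log_mul hc]
  ring

lemma entropy_sq_le_two_of_expect_psi2_le_one {h : Cube n → ℝ}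
    (hψ : expect (fun x => psi2 (h x)) ≤ 1) : entropy (fun x => h x ^ 2) ≤ 2 := by
  set B := expect (fun x => h x ^ 2)
  have hB : 0 ≤ B := by unfold B expect; positivity
  have hmain : expect (fun x => h x ^ 2 * Real.log (h x ^ 2)) ≤ 1 :=
    (expect_mono fun x => sq_mul_log_sq_le_psi2 (h x)).trans hψ
  have hBlogB : B - 1 ≤ B * Real.log B := Real.self_sub_one_le_mul_log hB
  rw [entropy_eq_sub]
  linarith

lemma entropy_sq_le_of_expect_psi2_div_le_one {g : Cube n → ℝ} {lam : ℝ} (hlam : 0 < lam)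
    (hψ : expect (fun x => psi2 (g x / lam)) ≤ 1) :
    entropy (fun x => g x ^ 2) ≤ 2 * lam ^ 2 := by
  have hscale : (fun x => g x ^ 2) = fun x => lam ^ 2 * (g x / lam) ^ 2 := by
    funext x
    field_simp
  rw [hscale, entropy_const_mul (by positivity), mul_comm]
  exact mul_le_mul_of_nonneg_right (entropy_sq_le_two_of_expect_psi2_le_one hψ) (by positivity)

end Entropy

section OrliczNorm

variable {n : ℕ}

-- Without this, `orliczNorm g` would be the junk value `sInf ∅ = 0`.
lemma exists_expect_psi2_div_le_one (g : Cube n → ℝ) :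
    ∃ lam, 0 < lam ∧ expect (fun x => psi2 (g x / lam)) ≤ 1 := by
  have hlim : Tendsto (fun lam => expect (fun x => psi2 (g x / lam))) atTop (𝓝 0) := by
    have hψ0 : expect (fun _ : Cube n => psi2 0) = 0 := by simp [expect, psi2]
    rw [← hψ0]
    exact tendsto_expect fun x =>
      (continuous_psi2.tendsto 0).comp (tendsto_const_nhds.div_atTop tendsto_id)
  obtain ⟨lam, hψ, hlam⟩ :=
    ((hlim.eventually (ge_mem_nhds zero_lt_one)).and (eventually_gt_atTop 0)).exists
  exact ⟨lam, hlam, hψ⟩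

lemma expect_psi2_div_le_one_of_orliczNorm_lt {g : Cube n → ℝ} {lam : ℝ}
    (hlam : orliczNorm g < lam) : 0 < lam ∧ expect (fun x => psi2 (g x / lam)) ≤ 1 := by
  obtain ⟨l, ⟨hl, hlψ⟩, hll⟩ := exists_lt_of_csInf_lt (exists_expect_psi2_div_le_one g) hlam
  refine ⟨hl.trans hll, (expect_mono fun x => psi2_le_psi2_of_sq_le ?_).trans hlψ⟩
  rw [div_pow, div_pow]
  exact div_le_div_of_nonneg_left (sq_nonneg _) (by positivity) (by gcongr)

end OrliczNorm

theorem entropy_le_orlicz_general {n : ℕ} (g : Cube n → ℝ) :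
    expect (fun x => g x ^ 2 *
        (Real.log (g x ^ 2) - Real.log (expect (fun y => g y ^ 2)))) ≤
      2 * orliczNorm g ^ 2 := by
  show entropy (fun x => g x ^ 2) ≤ _
  have hcont : Tendsto (fun lam : ℝ => 2 * lam ^ 2) (𝓝[>] orliczNorm g)
      (𝓝 (2 * orliczNorm g ^ 2)) :=
    ((continuous_const.mul (continuous_pow 2)).tendsto _).mono_left nhdsWithin_le_nhds
  refine ge_of_tendsto hcont (eventually_nhdsWithin_of_forall fun lam hlam => ?_)
  obtain ⟨hlam_pos, hψ⟩ := expect_psi2_div_le_one_of_orliczNorm_lt hlam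
  exact entropy_sq_le_of_expect_psi2_div_le_one hlam_pos hψ

/-- **(Inequality (11) of Cordero-Erausquin–Eskenazis.)** For every nonnegative
function `g` on the Hamming cube,
`𝔼[g²(log g² − log 𝔼g²)] ≤ 2‖g‖²_{L² log L}`. -/
theorem entropy_le_orlicz {n : ℕ} (g : Cube n → ℝ) (hg : ∀ x, 0 ≤ g x) :
    expect (fun x => g x ^ 2 *
        (Real.log (g x ^ 2) - Real.log (expect (fun y => g y ^ 2)))) ≤
      2 * orliczNorm g ^ 2 :=
  entropy_le_orlicz_general g
end

section
/- Let E be a normed space, p ≥ 2, and let f : Ω₂ⁿ → E satisfy the Lipschitz condition P²(f) ≤ 1. If 𝔼‖f‖_E^p > 0, then 𝔼[‖f‖_E^p (log ‖f‖_E^p − log 𝔼‖f‖_E^p)] ≤ p²·(𝔼‖f‖_E^p)^{1 − 2/p}. -/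
namespace EMB

/-- flip the i-th coordinate -/
def flip {n : ℕ} (x : Cube n) (i : Fin n) : Cube n := Function.update x i (!x i)

lemma flip_flip {n : ℕ} (x : Cube n) (i : Fin n) : flip (flip x i) i = x := by
  funext j
  by_cases h : j = i
  · subst h
    simp [flip, Function.update_self]
  · simp [flip, Function.update_of_ne h]

lemma flip_cons_zero {n : ℕ} (b : Bool) (x : Cube n) :
    flip (Fin.cons b x) 0 = Fin.cons (!b) x := by
  simp [flip, Fin.update_cons_zero]

lemma flip_cons_succ {n : ℕ} (b : Bool) (x : Cube n) (j : Fin n) :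
    flip (Fin.cons b x) j.succ = Fin.cons b (flip x j) := by
  simp [flip, ← Fin.cons_update]

lemma sum_cube_succ {n : ℕ} (F : Cube (n+1) → ℝ) :
    ∑ x : Cube (n+1), F x
      = ∑ x : Cube n, F (Fin.cons false x) + ∑ x : Cube n, F (Fin.cons true x) := by
  rw [← (Fin.consEquiv (fun _ : Fin (n+1) => Bool)).sum_comp (g := F)]
  rw [Fintype.sum_prod_type, Fintype.sum_bool]
  simp [Fin.consEquiv]
  ring

lemma expect_succ {n : ℕ} (F : Cube (n+1) → ℝ) :
    expect F = (expect (fun x => F (Fin.cons false x)) + expect (fun x => F (Fin.cons true x))) / 2 := by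
  unfold expect
  rw [sum_cube_succ]
  ring

lemma expect_add {n : ℕ} (f g : Cube n → ℝ) :
    expect (fun x => f x + g x) = expect f + expect g := by
  unfold expect; rw [Finset.sum_add_distrib]; ring

lemma expect_sub {n : ℕ} (f g : Cube n → ℝ) :
    expect (fun x => f x - g x) = expect f - expect g := by
  unfold expect; rw [Finset.sum_sub_distrib]; ring

lemma expect_const {n : ℕ} (c : ℝ) : expect (fun _ : Cube n => c) = c := by
  unfold expect
  rw [Finset.sum_const]
  simp only [Finset.card_univ, Fintype.card_fun, Fintype.card_bool, Fintype.card_fin,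
    nsmul_eq_mul]
  field_simp
  push_cast
  ring

lemma expect_mono {n : ℕ} {f g : Cube n → ℝ} (h : ∀ x, f x ≤ g x) : expect f ≤ expect g := by
  unfold expect
  gcongr with x
  exact h x

lemma expect_nonneg {n : ℕ} {f : Cube n → ℝ} (h : ∀ x, 0 ≤ f x) : 0 ≤ expect f := by
  unfold expect
  have : 0 ≤ ∑ x : Cube n, f x := Finset.sum_nonneg (fun x _ => h x)
  positivity

lemma expect_mul_const {n : ℕ} (f : Cube n → ℝ) (c : ℝ) :
    expect (fun x => f x * c) = expect f * c := by
  unfold expect; rw [← Finset.sum_mul]; ring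

lemma expect_flip {n : ℕ} (F : Cube n → ℝ) (i : Fin n) :
    expect (fun x => F (flip x i)) = expect F := by
  unfold expect
  congr 1
  exact Fintype.sum_bijective (fun x => flip x i)
    (Function.Involutive.bijective (fun x => flip_flip x i)) _ _ (fun x => rfl)

end EMB
namespace EMB

/-- two-point entropy -/
noncomputable def ent (u v : ℝ) : ℝ :=
  (u * Real.log u + v * Real.log v) / 2 - ((u + v) / 2) * Real.log ((u + v) / 2)

lemma ent_comm (u v : ℝ) : ent u v = ent v u := by
  unfold ent
  rw [add_comm u v]
  ring

/-- relative-entropy kernel -/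
noncomputable def K (a b : ℝ) : ℝ := a * Real.log a - a * Real.log b

lemma K_zero (b : ℝ) : K 0 b = 0 := by simp [K]

lemma ent_eq_K (u v : ℝ) : ent u v = (K u ((u + v) / 2) + K v ((u + v) / 2)) / 2 := by
  unfold ent K; ring

/-- log-sum inequality (two terms) -/
lemma K_add_le (a₁ a₂ b₁ b₂ : ℝ) (ha₁ : 0 ≤ a₁) (ha₂ : 0 ≤ a₂)
    (hb₁ : 0 ≤ b₁) (hb₂ : 0 ≤ b₂) (h₁ : b₁ = 0 → a₁ = 0) (h₂ : b₂ = 0 → a₂ = 0) :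
    K (a₁ + a₂) (b₁ + b₂) ≤ K a₁ b₁ + K a₂ b₂ := by
  rcases eq_or_lt_of_le hb₁ with hb₁0 | hb₁pos
  · rw [← hb₁0, h₁ hb₁0.symm]; simp [K_zero]
  rcases eq_or_lt_of_le hb₂ with hb₂0 | hb₂pos
  · rw [← hb₂0, h₂ hb₂0.symm]; simp [K_zero]
  rcases eq_or_lt_of_le ha₁ with ha₁0 | ha₁pos
  · rw [← ha₁0]; simp only [K_zero, zero_add]
    unfold K
    have : Real.log b₂ ≤ Real.log (b₁ + b₂) := Real.log_le_log hb₂pos (by linarith)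
    nlinarith [mul_le_mul_of_nonneg_left this ha₂]
  rcases eq_or_lt_of_le ha₂ with ha₂0 | ha₂pos
  · rw [← ha₂0]; simp only [K_zero, add_zero]
    unfold K
    have : Real.log b₁ ≤ Real.log (b₁ + b₂) := Real.log_le_log hb₁pos (by linarith)
    nlinarith [mul_le_mul_of_nonneg_left this ha₁]
  -- main case: everything positive
  have hc : (0:ℝ) < a₁ + a₂ := by linarith
  have hd : (0:ℝ) < b₁ + b₂ := by linarith
  have key : ∀ a b : ℝ, 0 < a → 0 < b →
      a - b * (a₁ + a₂) / (b₁ + b₂) ≤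
        a * Real.log a - a * Real.log b - a * Real.log (a₁ + a₂) + a * Real.log (b₁ + b₂) := by
    intro a b ha hb
    have hx : (0:ℝ) < a * (b₁ + b₂) / (b * (a₁ + a₂)) := by positivity
    have h := Real.one_sub_inv_le_log_of_pos hx
    have hlog : Real.log (a * (b₁ + b₂) / (b * (a₁ + a₂)))
        = Real.log a + Real.log (b₁ + b₂) - Real.log b - Real.log (a₁ + a₂) := by
      rw [Real.log_div (by positivity) (by positivity), Real.log_mul (ne_of_gt ha) (ne_of_gt hd),
        Real.log_mul (ne_of_gt hb) (ne_of_gt hc)]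
      ring
    rw [hlog] at h
    have hinv : (a * (b₁ + b₂) / (b * (a₁ + a₂)))⁻¹ = b * (a₁ + a₂) / (a * (b₁ + b₂)) := by
      field_simp
    rw [hinv] at h
    have := mul_le_mul_of_nonneg_left h (le_of_lt ha)
    have hsimp : a * (1 - b * (a₁ + a₂) / (a * (b₁ + b₂))) = a - b * (a₁ + a₂) / (b₁ + b₂) := by
      field_simp
    rw [hsimp] at this
    nlinarith [this]
  have k1 := key a₁ b₁ ha₁pos hb₁pos
  have k2 := key a₂ b₂ ha₂pos hb₂pos
  have hsum : b₁ * (a₁ + a₂) / (b₁ + b₂) + b₂ * (a₁ + a₂) / (b₁ + b₂) = a₁ + a₂ := by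
    field_simp
  unfold K
  have expand1 : (a₁ + a₂) * Real.log (a₁ + a₂) - (a₁ + a₂) * Real.log (b₁ + b₂)
      = a₁ * Real.log (a₁ + a₂) + a₂ * Real.log (a₁ + a₂)
        - a₁ * Real.log (b₁ + b₂) - a₂ * Real.log (b₁ + b₂) := by ring
  rw [expand1]
  linarith [k1, k2]

lemma K_half (a b : ℝ) (ha : 0 ≤ a) (hb : 0 ≤ b) (h : b = 0 → a = 0) :
    K (a / 2) (b / 2) = K a b / 2 := by
  rcases eq_or_lt_of_le ha with ha0 | hapos
  · rw [← ha0]; simp [K_zero]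
  have hbpos : 0 < b := by
    rcases eq_or_lt_of_le hb with hb0 | h'
    · exact absurd (h hb0.symm) (ne_of_gt hapos)
    · exact h'
  unfold K
  rw [Real.log_div (ne_of_gt hapos) two_ne_zero, Real.log_div (ne_of_gt hbpos) two_ne_zero]
  ring

/-- midpoint convexity of the two-point entropy -/
lemma ent_midpoint (u₁ v₁ u₂ v₂ : ℝ) (hu₁ : 0 ≤ u₁) (hv₁ : 0 ≤ v₁) (hu₂ : 0 ≤ u₂)
    (hv₂ : 0 ≤ v₂) :
    ent ((u₁ + u₂) / 2) ((v₁ + v₂) / 2) ≤ (ent u₁ v₁ + ent u₂ v₂) / 2 := by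
  rw [ent_eq_K, ent_eq_K, ent_eq_K]
  have harg : ((u₁ + u₂) / 2 + (v₁ + v₂) / 2) / 2
      = ((u₁ + v₁) / 2 + (u₂ + v₂) / 2) / 2 := by ring
  rw [harg]
  have hm₁ : (0:ℝ) ≤ (u₁ + v₁) / 2 := by linarith
  have hm₂ : (0:ℝ) ≤ (u₂ + v₂) / 2 := by linarith
  have hz₁u : (u₁ + v₁) / 2 = 0 → u₁ = 0 := fun h => by linarith
  have hz₁v : (u₁ + v₁) / 2 = 0 → v₁ = 0 := fun h => by linarith
  have hz₂u : (u₂ + v₂) / 2 = 0 → u₂ = 0 := fun h => by linarith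
  have hz₂v : (u₂ + v₂) / 2 = 0 → v₂ = 0 := fun h => by linarith
  have hu : K ((u₁ + u₂) / 2) (((u₁ + v₁) / 2 + (u₂ + v₂) / 2) / 2)
      ≤ (K u₁ ((u₁ + v₁) / 2) + K u₂ ((u₂ + v₂) / 2)) / 2 := by
    have hhalf : K ((u₁ + u₂) / 2) (((u₁ + v₁) / 2 + (u₂ + v₂) / 2) / 2)
        = K (u₁ + u₂) ((u₁ + v₁) / 2 + (u₂ + v₂) / 2) / 2 := by
      apply K_half _ _ (by linarith) (by linarith)
      intro h
      have h1 : (u₁ + v₁) / 2 = 0 := by linarith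
      have h2 : (u₂ + v₂) / 2 = 0 := by linarith
      have := hz₁u h1; have := hz₂u h2; linarith
    rw [hhalf]
    have := K_add_le u₁ u₂ ((u₁ + v₁) / 2) ((u₂ + v₂) / 2) hu₁ hu₂ hm₁ hm₂ hz₁u hz₂u
    linarith
  have hv : K ((v₁ + v₂) / 2) (((u₁ + v₁) / 2 + (u₂ + v₂) / 2) / 2)
      ≤ (K v₁ ((u₁ + v₁) / 2) + K v₂ ((u₂ + v₂) / 2)) / 2 := by
    have hhalf : K ((v₁ + v₂) / 2) (((u₁ + v₁) / 2 + (u₂ + v₂) / 2) / 2)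
        = K (v₁ + v₂) ((u₁ + v₁) / 2 + (u₂ + v₂) / 2) / 2 := by
      apply K_half _ _ (by linarith) (by linarith)
      intro h
      have h1 : (u₁ + v₁) / 2 = 0 := by linarith
      have h2 : (u₂ + v₂) / 2 = 0 := by linarith
      have := hz₁v h1; have := hz₂v h2; linarith
    rw [hhalf]
    have := K_add_le v₁ v₂ ((u₁ + v₁) / 2) ((u₂ + v₂) / 2) hv₁ hv₂ hm₁ hm₂ hz₁v hz₂v
    linarith
  linarith

end EMB
namespace EMB

lemma expect_zero (f : Cube 0 → ℝ) : expect f = f default := by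
  unfold expect
  rw [Fintype.sum_unique]
  simp only [pow_zero, div_one]
  congr 1
  funext i
  exact i.elim0

lemma expect_nonneg' {n : ℕ} {f : Cube n → ℝ} (h : ∀ x, 0 ≤ f x) : 0 ≤ expect f :=
  expect_nonneg h

/-- Jensen's inequality for `ent` over the cube -/
lemma ent_expect_le {n : ℕ} (u v : Cube n → ℝ) (hu : ∀ x, 0 ≤ u x) (hv : ∀ x, 0 ≤ v x) :
    ent (expect u) (expect v) ≤ expect (fun x => ent (u x) (v x)) := by
  induction n with
  | zero =>
    rw [expect_zero, expect_zero, expect_zero]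
  | succ n ih =>
    rw [expect_succ u, expect_succ v, expect_succ (fun x => ent (u x) (v x))]
    have h1 : ent ((expect (fun x => u (Fin.cons false x)) + expect (fun x => u (Fin.cons true x))) / 2)
        ((expect (fun x => v (Fin.cons false x)) + expect (fun x => v (Fin.cons true x))) / 2)
        ≤ (ent (expect (fun x => u (Fin.cons false x))) (expect (fun x => v (Fin.cons false x)))
          + ent (expect (fun x => u (Fin.cons true x))) (expect (fun x => v (Fin.cons true x)))) / 2 :=
      ent_midpoint _ _ _ _ (expect_nonneg' fun x => hu _) (expect_nonneg' fun x => hv _)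
        (expect_nonneg' fun x => hu _) (expect_nonneg' fun x => hv _)
    have h2 := ih (fun x => u (Fin.cons false x)) (fun x => v (Fin.cons false x))
      (fun x => hu _) (fun x => hv _)
    have h3 := ih (fun x => u (Fin.cons true x)) (fun x => v (Fin.cons true x))
      (fun x => hu _) (fun x => hv _)
    calc _ ≤ _ := h1
    _ ≤ _ := by
      have := add_le_add h2 h3
      linarith

/-- Entropy tensorization on the cube -/
lemma entropy_le_sum {n : ℕ} (g : Cube n → ℝ) (hg : ∀ x, 0 ≤ g x) :
    expect (fun x => g x * Real.log (g x)) - expect g * Real.log (expect g)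
      ≤ ∑ i : Fin n, expect (fun x => ent (g x) (g (flip x i))) := by
  induction n with
  | zero =>
    rw [expect_zero, expect_zero]
    simp
  | succ n ih =>
    set g0 : Cube n → ℝ := fun x => g (Fin.cons false x) with hg0
    set g1 : Cube n → ℝ := fun x => g (Fin.cons true x) with hg1
    have hg0n : ∀ x, 0 ≤ g0 x := fun x => hg _
    have hg1n : ∀ x, 0 ≤ g1 x := fun x => hg _
    -- split the expectation
    have e1 : expect (fun x => g x * Real.log (g x))
        = (expect (fun x => g0 x * Real.log (g0 x)) + expect (fun x => g1 x * Real.log (g1 x))) / 2 :=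
      expect_succ _
    have e2 : expect g = (expect g0 + expect g1) / 2 := expect_succ _
    -- split the i-sum
    rw [Fin.sum_univ_succ]
    have t0 : expect (fun x : Cube (n+1) => ent (g x) (g (flip x 0)))
        = expect (fun x => ent (g0 x) (g1 x)) := by
      rw [expect_succ]
      have a1 : (fun x : Cube n => ent (g (Fin.cons false x)) (g (flip (Fin.cons false x) 0)))
          = fun x => ent (g0 x) (g1 x) := by
        funext x; rw [flip_cons_zero]; rfl
      have a2 : (fun x : Cube n => ent (g (Fin.cons true x)) (g (flip (Fin.cons true x) 0)))
          = fun x => ent (g1 x) (g0 x) := by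
        funext x; rw [flip_cons_zero]; rfl
      rw [a1, a2]
      have : (fun x : Cube n => ent (g1 x) (g0 x)) = fun x => ent (g0 x) (g1 x) := by
        funext x; rw [ent_comm]
      rw [this]
      ring
    rw [t0]
    have tsucc : ∀ j : Fin n, expect (fun x : Cube (n+1) => ent (g x) (g (flip x j.succ)))
        = (expect (fun x => ent (g0 x) (g0 (flip x j)))
          + expect (fun x => ent (g1 x) (g1 (flip x j)))) / 2 := by
      intro j
      rw [expect_succ]
      have b1 : (fun x : Cube n => ent (g (Fin.cons false x)) (g (flip (Fin.cons false x) j.succ)))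
          = fun x => ent (g0 x) (g0 (flip x j)) := by
        funext x; rw [flip_cons_succ]
      have b2 : (fun x : Cube n => ent (g (Fin.cons true x)) (g (flip (Fin.cons true x) j.succ)))
          = fun x => ent (g1 x) (g1 (flip x j)) := by
        funext x; rw [flip_cons_succ]
      rw [b1, b2]
    have hsumsucc : ∑ j : Fin n, expect (fun x : Cube (n+1) => ent (g x) (g (flip x j.succ)))
        = (∑ j : Fin n, expect (fun x => ent (g0 x) (g0 (flip x j)))
          + ∑ j : Fin n, expect (fun x => ent (g1 x) (g1 (flip x j)))) / 2 := by
      calc ∑ j : Fin n, expect (fun x : Cube (n+1) => ent (g x) (g (flip x j.succ)))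
          = ∑ j : Fin n, ((expect fun x => ent (g0 x) (g0 (flip x j)))
            + expect fun x => ent (g1 x) (g1 (flip x j))) / 2 :=
        Finset.sum_congr rfl fun j _ => tsucc j
        _ = (∑ j : Fin n, ((expect fun x => ent (g0 x) (g0 (flip x j)))
            + expect fun x => ent (g1 x) (g1 (flip x j)))) / 2 := (Finset.sum_div _ _ _).symm
        _ = _ := by rw [Finset.sum_add_distrib]
    rw [hsumsucc]
    have hJ : ent (expect g0) (expect g1) ≤ expect (fun x => ent (g0 x) (g1 x)) :=
      ent_expect_le g0 g1 hg0n hg1n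
    have i0 := ih g0 hg0n
    have i1 := ih g1 hg1n
    -- algebraic identity for the entropy split
    have hent : expect (fun x => g x * Real.log (g x)) - expect g * Real.log (expect g)
        = (expect (fun x => g0 x * Real.log (g0 x)) - expect g0 * Real.log (expect g0)) / 2
          + (expect (fun x => g1 x * Real.log (g1 x)) - expect g1 * Real.log (expect g1)) / 2
          + ent (expect g0) (expect g1) := by
      rw [e1, e2]
      unfold ent
      ring
    rw [hent]
    linarith

end EMB
namespace EMB

noncomputable def gross (t : ℝ) : ℝ :=
  (t - 1) ^ 2 / 2 - t ^ 2 * Real.log (t ^ 2) / 2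
    + (t ^ 2 + 1) / 2 * Real.log ((t ^ 2 + 1) / 2)

noncomputable def grossD (t : ℝ) : ℝ :=
  (t - 1) - t * Real.log (t ^ 2) + t * Real.log ((t ^ 2 + 1) / 2)

noncomputable def grossDD (t : ℝ) : ℝ :=
  1 - (Real.log (t ^ 2) + 2) + (Real.log ((t ^ 2 + 1) / 2) + 2 * t ^ 2 / (t ^ 2 + 1))

lemma sq_pos_of_ne {t : ℝ} (ht : t ≠ 0) : 0 < t ^ 2 := by positivity

lemma mid_pos (t : ℝ) : 0 < (t ^ 2 + 1) / 2 := by positivity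

lemma hasDerivAt_gross {t : ℝ} (ht : t ≠ 0) : HasDerivAt gross (grossD t) t := by
  have hsq : HasDerivAt (fun t : ℝ => t ^ 2) (2 * t) t := by
    simpa using hasDerivAt_pow 2 t
  have h1 : HasDerivAt (fun t : ℝ => (t - 1) ^ 2 / 2) (t - 1) t := by
    have := (((hasDerivAt_id t).sub_const 1).pow 2).div_const 2
    refine this.congr_deriv ?_
    push_cast [id_eq]
    ring
  have h2 : HasDerivAt (fun t : ℝ => t ^ 2 * Real.log (t ^ 2) / 2)
      (t * Real.log (t ^ 2) + t) t := by
    have := (hsq.mul (hsq.log (ne_of_gt (sq_pos_of_ne ht)))).div_const 2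
    refine this.congr_deriv ?_
    field_simp
  have hu : HasDerivAt (fun t : ℝ => (t ^ 2 + 1) / 2) t t := by
    have := (hsq.add_const 1).div_const 2
    refine this.congr_deriv ?_
    ring
  have h3 : HasDerivAt (fun t : ℝ => (t ^ 2 + 1) / 2 * Real.log ((t ^ 2 + 1) / 2))
      (Real.log ((t ^ 2 + 1) / 2) * t + t) t := by
    have := hu.mul (hu.log (ne_of_gt (mid_pos t)))
    refine this.congr_deriv ?_
    field_simp
  have := (h1.sub h2).add h3
  refine this.congr_deriv ?_
  unfold grossD
  ring

lemma hasDerivAt_grossD {t : ℝ} (ht : t ≠ 0) : HasDerivAt grossD (grossDD t) t := by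
  have hsq : HasDerivAt (fun t : ℝ => t ^ 2) (2 * t) t := by
    simpa using hasDerivAt_pow 2 t
  have h1 : HasDerivAt (fun t : ℝ => t - 1) 1 t := (hasDerivAt_id t).sub_const 1
  have h2 : HasDerivAt (fun t : ℝ => t * Real.log (t ^ 2))
      (Real.log (t ^ 2) + 2) t := by
    have := (hasDerivAt_id t).mul (hsq.log (ne_of_gt (sq_pos_of_ne ht)))
    refine this.congr_deriv ?_
    have h2' : t ^ 2 ≠ 0 := ne_of_gt (sq_pos_of_ne ht)
    simp only [id]
    field_simp
    try ring
  have hu : HasDerivAt (fun t : ℝ => (t ^ 2 + 1) / 2) t t := by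
    have := (hsq.add_const 1).div_const 2
    refine this.congr_deriv ?_
    ring
  have h3 : HasDerivAt (fun t : ℝ => t * Real.log ((t ^ 2 + 1) / 2))
      (Real.log ((t ^ 2 + 1) / 2) + 2 * t ^ 2 / (t ^ 2 + 1)) t := by
    have := (hasDerivAt_id t).mul (hu.log (ne_of_gt (mid_pos t)))
    refine this.congr_deriv ?_
    have h3' : t ^ 2 + 1 ≠ 0 := by positivity
    simp only [id]
    field_simp
    try ring
  exact (h1.sub h2).add h3

lemma grossDD_nonneg {t : ℝ} (ht : t ≠ 0) : 0 ≤ grossDD t := by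
  set s : ℝ := t ^ 2 / ((t ^ 2 + 1) / 2) with hs
  have hspos : 0 < s := div_pos (sq_pos_of_ne ht) (mid_pos t)
  have hlog : Real.log s = Real.log (t ^ 2) - Real.log ((t ^ 2 + 1) / 2) :=
    Real.log_div (ne_of_gt (sq_pos_of_ne ht)) (ne_of_gt (mid_pos t))
  have hkey := Real.log_le_sub_one_of_pos hspos
  have hseq : s = 2 * t ^ 2 / (t ^ 2 + 1) := by
    rw [hs]
    field_simp
  unfold grossDD
  rw [← hseq]
  linarith [hkey, hlog.ge, hlog.le]

lemma grossD_one : grossD 1 = 0 := by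
  unfold grossD
  norm_num

lemma gross_one : gross 1 = 0 := by
  unfold gross
  norm_num

lemma grossD_mono {a b : ℝ} (ha : 0 < a) (hab : a ≤ b) : grossD a ≤ grossD b := by
  have hcont : ContinuousOn grossD (Set.Icc a b) := fun x hx =>
    (hasDerivAt_grossD (ne_of_gt (lt_of_lt_of_le ha hx.1))).continuousAt.continuousWithinAt
  have hdiff : DifferentiableOn ℝ grossD (interior (Set.Icc a b)) := by
    intro x hx
    rw [interior_Icc] at hx
    exact (hasDerivAt_grossD (ne_of_gt (lt_of_lt_of_le ha hx.1.le))).differentiableAt.differentiableWithinAt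
  have hderiv : ∀ x ∈ interior (Set.Icc a b), 0 ≤ deriv grossD x := by
    intro x hx
    rw [interior_Icc] at hx
    have hx0 : x ≠ 0 := ne_of_gt (lt_of_lt_of_le ha hx.1.le)
    rw [(hasDerivAt_grossD hx0).deriv]
    exact grossDD_nonneg hx0
  exact monotoneOn_of_deriv_nonneg (convex_Icc a b) hcont hdiff hderiv
    (Set.left_mem_Icc.2 hab) (Set.right_mem_Icc.2 hab) hab

lemma grossD_nonneg_of_one_le {t : ℝ} (ht : 1 ≤ t) : 0 ≤ grossD t := by
  rw [← grossD_one]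
  exact grossD_mono one_pos ht

lemma grossD_nonpos_of_le_one {t : ℝ} (ht0 : 0 < t) (ht : t ≤ 1) : grossD t ≤ 0 := by
  rw [← grossD_one]
  exact grossD_mono ht0 ht

lemma gross_nonneg {t : ℝ} (ht : 0 ≤ t) : 0 ≤ gross t := by
  rcases eq_or_lt_of_le ht with h0 | htpos
  · rw [← h0]
    unfold gross
    have h1 : Real.log ((0:ℝ)^2 + 1) / 2 = 0 := by norm_num
    have hlog2 : Real.log 2 ≤ 1 := by
      have := Real.log_le_sub_one_of_pos (by norm_num : (0:ℝ) < 2)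
      linarith
    have : Real.log ((0:ℝ)^2 * 0 + 1/2) = - Real.log 2 := by
      norm_num
      rw [← Real.log_inv]
      norm_num
    simp only [ne_eq, OfNat.ofNat_ne_zero, not_false_eq_true, zero_pow, mul_zero,
      Real.log_zero, zero_div, zero_add, zero_sub, sub_zero]
    have h12 : Real.log ((0:ℝ) + 1) = 0 := by norm_num
    have hhalf : Real.log (((0:ℝ)+1)/2) = - Real.log 2 := by
      rw [Real.log_div (by norm_num) (by norm_num)]
      norm_num
    rw [show ((0:ℝ)+1)/2 = 1/2 by norm_num] at hhalf
    nlinarith [hhalf, hlog2]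
  · rcases le_or_gt 1 t with h1t | ht1
    · -- t ≥ 1 : gross monotone on [1,t]
      have hcont : ContinuousOn gross (Set.Icc 1 t) := fun x hx =>
        (hasDerivAt_gross (ne_of_gt (lt_of_lt_of_le one_pos hx.1))).continuousAt.continuousWithinAt
      have hdiff : DifferentiableOn ℝ gross (interior (Set.Icc 1 t)) := by
        intro x hx
        rw [interior_Icc] at hx
        exact (hasDerivAt_gross (ne_of_gt (lt_of_lt_of_le one_pos hx.1.le))).differentiableAt.differentiableWithinAt
      have hderiv : ∀ x ∈ interior (Set.Icc 1 t), 0 ≤ deriv gross x := by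
        intro x hx
        rw [interior_Icc] at hx
        have hx0 : x ≠ 0 := ne_of_gt (lt_of_lt_of_le one_pos hx.1.le)
        rw [(hasDerivAt_gross hx0).deriv]
        exact grossD_nonneg_of_one_le hx.1.le
      have := monotoneOn_of_deriv_nonneg (convex_Icc 1 t) hcont hdiff hderiv
        (Set.left_mem_Icc.2 h1t) (Set.right_mem_Icc.2 h1t) h1t
      rw [gross_one] at this
      exact this
    · -- 0 < t < 1 : gross antitone on [t,1]
      have hcont : ContinuousOn gross (Set.Icc t 1) := fun x hx =>
        (hasDerivAt_gross (ne_of_gt (lt_of_lt_of_le htpos hx.1))).continuousAt.continuousWithinAt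
      have hdiff : DifferentiableOn ℝ gross (interior (Set.Icc t 1)) := by
        intro x hx
        rw [interior_Icc] at hx
        exact (hasDerivAt_gross (ne_of_gt (lt_of_lt_of_le htpos hx.1.le))).differentiableAt.differentiableWithinAt
      have hderiv : ∀ x ∈ interior (Set.Icc t 1), deriv gross x ≤ 0 := by
        intro x hx
        rw [interior_Icc] at hx
        have hx0 : 0 < x := lt_of_lt_of_le htpos hx.1.le
        rw [(hasDerivAt_gross (ne_of_gt hx0)).deriv]
        exact grossD_nonpos_of_le_one hx0 hx.2.le
      have := antitoneOn_of_deriv_nonpos (convex_Icc t 1) hcont hdiff hderiv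
        (Set.left_mem_Icc.2 ht1.le) (Set.right_mem_Icc.2 ht1.le) ht1.le
      rw [gross_one] at this
      exact this

end EMB
namespace EMB

lemma ent_smul {c u v : ℝ} (hc : 0 < c) (hu : 0 ≤ u) (hv : 0 ≤ v) :
    ent (c * u) (c * v) = c * ent u v := by
  have lm : ∀ w : ℝ, 0 ≤ w → (c * w) * Real.log (c * w)
      = c * (w * Real.log w) + (c * w) * Real.log c := by
    intro w hw
    rcases eq_or_lt_of_le hw with h0 | hpos
    · rw [← h0]; simp
    · rw [Real.log_mul (ne_of_gt hc) (ne_of_gt hpos)]; ring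
  have harg : (c * u + c * v) / 2 = c * ((u + v) / 2) := by ring
  unfold ent
  rw [harg, lm u hu, lm v hv, lm ((u + v) / 2) (by linarith)]
  ring

lemma ent_zero_zero : ent 0 0 = 0 := by simp [ent]

/-- Gross's two-point logarithmic Sobolev inequality -/
lemma ent_sq_le {x y : ℝ} (hx : 0 ≤ x) (hy : 0 ≤ y) :
    ent (x ^ 2) (y ^ 2) ≤ (x - y) ^ 2 / 2 := by
  have main : ∀ a b : ℝ, 0 ≤ a → 0 < b → ent (a ^ 2) (b ^ 2) ≤ (a - b) ^ 2 / 2 := by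
    intro a b ha hb
    set t : ℝ := a / b with htdef
    have ht : 0 ≤ t := by positivity
    have ha2 : a ^ 2 = b ^ 2 * t ^ 2 := by
      rw [htdef]; field_simp
    have hb2 : b ^ 2 = b ^ 2 * 1 := by ring
    have hscale : ent (a ^ 2) (b ^ 2) = b ^ 2 * ent (t ^ 2) 1 := by
      calc ent (a ^ 2) (b ^ 2) = ent (b ^ 2 * t ^ 2) (b ^ 2 * 1) := by rw [← ha2, ← hb2]
        _ = b ^ 2 * ent (t ^ 2) 1 := ent_smul (by positivity) (by positivity) zero_le_one
    have hent1 : ent (t ^ 2) 1 = t ^ 2 * Real.log (t ^ 2) / 2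
        - (t ^ 2 + 1) / 2 * Real.log ((t ^ 2 + 1) / 2) := by
      unfold ent
      rw [Real.log_one]
      ring
    have hg := gross_nonneg ht
    unfold gross at hg
    have hent2 : ent (t ^ 2) 1 ≤ (t - 1) ^ 2 / 2 := by rw [hent1]; linarith
    have hfin : b ^ 2 * ent (t ^ 2) 1 ≤ b ^ 2 * ((t - 1) ^ 2 / 2) :=
      mul_le_mul_of_nonneg_left hent2 (by positivity)
    have hlast : b ^ 2 * ((t - 1) ^ 2 / 2) = (a - b) ^ 2 / 2 := by
      rw [htdef]
      field_simp
    rw [hscale]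
    rw [hlast] at hfin
    exact hfin
  rcases eq_or_lt_of_le hy with hy0 | hypos
  · rcases eq_or_lt_of_le hx with hx0 | hxpos
    · rw [← hx0, ← hy0]
      simp [ent_zero_zero]
    · -- y = 0, x > 0
      rw [← hy0]
      have h0 : (0:ℝ) ^ 2 = 0 := by norm_num
      rw [h0]
      have hval : ent (x ^ 2) 0 = x ^ 2 / 2 * Real.log 2 := by
        unfold ent
        rw [Real.log_zero]
        have : Real.log (x ^ 2 / 2) = Real.log (x ^ 2) - Real.log 2 :=
          Real.log_div (by positivity) two_ne_zero
        have harg : (x ^ 2 + 0) / 2 = x ^ 2 / 2 := by ring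
        rw [harg, this]
        ring
      rw [hval]
      have hlog2 : Real.log 2 ≤ 1 := by
        have := Real.log_le_sub_one_of_pos (by norm_num : (0:ℝ) < 2)
        linarith
      have : x ^ 2 / 2 * Real.log 2 ≤ x ^ 2 / 2 * 1 :=
        mul_le_mul_of_nonneg_left hlog2 (by positivity)
      calc x ^ 2 / 2 * Real.log 2 ≤ x ^ 2 / 2 * 1 := this
        _ = (x - 0) ^ 2 / 2 := by ring
  · exact main x y hx hypos

/-- Bernoulli-type mean value bound for rpow -/
lemma rpow_mvt {q a b : ℝ} (hq : 1 ≤ q) (hb : 0 ≤ b) (hba : b ≤ a) :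
    a ^ q - b ^ q ≤ q * a ^ (q - 1) * (a - b) := by
  have ha : 0 ≤ a := le_trans hb hba
  rcases eq_or_lt_of_le ha with ha0 | hapos
  · have hb0 : b = 0 := le_antisymm (by rw [← ha0] at hba; exact hba) hb
    rw [← ha0, hb0]
    norm_num
  · set t : ℝ := b / a with htdef
    have ht0 : 0 ≤ t := by positivity
    have ht1 : t ≤ 1 := by
      rw [htdef]
      exact div_le_one_of_le₀ hba ha
    have hbern : 1 + q * (t - 1) ≤ (1 + (t - 1)) ^ q :=
      one_add_mul_self_le_rpow_one_add (by linarith) hq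
    have ht' : (1:ℝ) + (t - 1) = t := by ring
    rw [ht'] at hbern
    have hbq : b ^ q = a ^ q * t ^ q := by
      rw [htdef, ← Real.mul_rpow ha ht0]
      congr 1
      rw [mul_comm, div_mul_cancel₀ _ (ne_of_gt hapos)]
    have haq : 0 < a ^ q := Real.rpow_pos_of_pos hapos q
    have key : a ^ q - b ^ q ≤ a ^ q * (q * (1 - t)) := by
      rw [hbq]
      have := mul_le_mul_of_nonneg_left hbern (le_of_lt haq)
      nlinarith [this]
    have hsplit : a ^ q = a ^ (q - 1) * a := by
      rw [← Real.rpow_add_one (ne_of_gt hapos)]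
      norm_num
    have hfin : a ^ q * (q * (1 - t)) = q * a ^ (q - 1) * (a - b) := by
      rw [hsplit, htdef]
      field_simp
    rw [hfin] at key
    exact key

/-- combined two-point step: `ent (a^p) (b^p) ≤ (p²/2)·a^{p-2}·((a-b)/2)²` for `b ≤ a` -/
lemma ent_rpow_le {p a b : ℝ} (hp : 2 ≤ p) (hb : 0 ≤ b) (hba : b ≤ a) :
    ent (a ^ p) (b ^ p) ≤ p ^ 2 / 2 * (a ^ (p - 2) * ((a - b) / 2) ^ 2) := by
  have ha : 0 ≤ a := le_trans hb hba
  rcases eq_or_lt_of_le ha with ha0 | hapos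
  · have hb0 : b = 0 := le_antisymm (by rw [← ha0] at hba; exact hba) hb
    rw [← ha0, hb0]
    rw [Real.zero_rpow (by linarith : p ≠ 0)]
    simp [ent_zero_zero]
  · set X : ℝ := a ^ (p / 2) with hX
    set Y : ℝ := b ^ (p / 2) with hY
    have hXnn : 0 ≤ X := Real.rpow_nonneg ha _
    have hYnn : 0 ≤ Y := Real.rpow_nonneg hb _
    have hXsq : X ^ 2 = a ^ p := by
      rw [hX, sq, ← Real.rpow_add hapos]
      norm_num
    have hYsq : Y ^ 2 = b ^ p := by
      rcases eq_or_lt_of_le hb with hb0 | hbpos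
      · rw [hY, ← hb0, Real.zero_rpow (by linarith : p / 2 ≠ 0),
          Real.zero_rpow (by linarith : p ≠ 0)]
        norm_num
      · rw [hY, sq, ← Real.rpow_add hbpos]
        norm_num
    have hgross : ent (X ^ 2) (Y ^ 2) ≤ (X - Y) ^ 2 / 2 := ent_sq_le hXnn hYnn
    rw [hXsq, hYsq] at hgross
    -- bound (X - Y)²
    have hmvt : X - Y ≤ p / 2 * a ^ (p / 2 - 1) * (a - b) :=
      le_trans (le_of_eq rfl) (by
        have := rpow_mvt (q := p / 2) (by linarith) hb hba
        linarith)
    have hXY : 0 ≤ X - Y := by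
      have : Y ≤ X := Real.rpow_le_rpow hb hba (by positivity)
      linarith
    have hRnn : 0 ≤ p / 2 * a ^ (p / 2 - 1) * (a - b) := by
      have : 0 ≤ a ^ (p / 2 - 1) := Real.rpow_nonneg ha _
      have hab : 0 ≤ a - b := by linarith
      positivity
    have hsq : (X - Y) ^ 2 ≤ (p / 2 * a ^ (p / 2 - 1) * (a - b)) ^ 2 := by
      apply sq_le_sq'
      · linarith
      · exact hmvt
    have hpow : (a ^ (p / 2 - 1)) ^ 2 = a ^ (p - 2) := by
      rw [sq, ← Real.rpow_add hapos]
      congr 1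
      ring
    calc ent (a ^ p) (b ^ p) ≤ (X - Y) ^ 2 / 2 := hgross
      _ ≤ (p / 2 * a ^ (p / 2 - 1) * (a - b)) ^ 2 / 2 := by linarith
      _ = p ^ 2 / 2 * (a ^ (p - 2) * ((a - b) / 2) ^ 2) := by
        rw [mul_pow, mul_pow, hpow]
        ring

end EMB
namespace EMB

lemma expect_const_mul {n : ℕ} (c : ℝ) (f : Cube n → ℝ) :
    expect (fun x => c * f x) = c * expect f := by
  unfold expect
  rw [← Finset.mul_sum, mul_div_assoc]

lemma expect_sum {n m : ℕ} (F : Cube n → Fin m → ℝ) :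
    expect (fun x => ∑ i, F x i) = ∑ i, expect (fun x => F x i) := by
  unfold expect
  rw [Finset.sum_comm, Finset.sum_div]

lemma expect_sq_sum_sgn : ∀ {n : ℕ} (a : Fin n → ℝ),
    expect (fun δ : Cube n => (∑ i, sgn (δ i) * a i) ^ 2) = ∑ i, a i ^ 2 := by
  intro n
  induction n with
  | zero => intro a; rw [expect_zero]; simp
  | succ n ih =>
    intro a
    rw [expect_succ]
    have split : ∀ (b : Bool) (δ : Cube n), (∑ i : Fin (n+1), sgn ((Fin.cons b δ : Cube (n+1)) i) * a i)
        = sgn b * a 0 + ∑ j : Fin n, sgn (δ j) * a (Fin.succ j) := by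
      intro b δ
      rw [Fin.sum_univ_succ]
      simp [Fin.cons_zero, Fin.cons_succ]
    have e0 : (fun δ : Cube n => (∑ i : Fin (n+1), sgn ((Fin.cons false δ : Cube (n+1)) i) * a i) ^ 2)
        = fun δ => (-(a 0) + ∑ j : Fin n, sgn (δ j) * a (Fin.succ j)) ^ 2 := by
      funext δ; rw [split]; simp [sgn]
    have e1 : (fun δ : Cube n => (∑ i : Fin (n+1), sgn ((Fin.cons true δ : Cube (n+1)) i) * a i) ^ 2)
        = fun δ => (a 0 + ∑ j : Fin n, sgn (δ j) * a (Fin.succ j)) ^ 2 := by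
      funext δ; rw [split]; simp [sgn]
    rw [e0, e1, ← expect_add]
    have comb : (fun δ : Cube n => (-(a 0) + ∑ j : Fin n, sgn (δ j) * a (Fin.succ j)) ^ 2
        + (a 0 + ∑ j : Fin n, sgn (δ j) * a (Fin.succ j)) ^ 2)
        = fun δ => (a 0 ^ 2) * 2 + ((∑ j : Fin n, sgn (δ j) * a (Fin.succ j)) ^ 2) * 2 := by
      funext δ; ring
    rw [comb, expect_add, expect_mul_const, expect_mul_const, expect_const,
      ih (fun j => a (Fin.succ j)), Fin.sum_univ_succ]
    ring

lemma grad_bound {E : Type*} [NormedAddCommGroup E] [NormedSpace ℝ E] {n : ℕ}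
    (f : Cube n → E) (x : Cube n)
    (hLip : expect (fun δ : Cube n => ‖∑ i, sgn (δ i) • Di f i x‖ ^ 2) ≤ 1) :
    ∑ i : Fin n, (max ((‖f x‖ - ‖f (flip x i)‖) / 2) 0) ^ 2 ≤ 1 := by
  obtain ⟨ξ, hξnorm, hξval'⟩ := exists_dual_vector'' ℝ (f x)
  have hξval : ξ (f x) = ‖f x‖ := by simpa using hξval' 
  have hξabs : ∀ z : E, |ξ z| ≤ ‖z‖ := by
    intro z
    calc |ξ z| = ‖ξ z‖ := (Real.norm_eq_abs _).symm
      _ ≤ ‖ξ‖ * ‖z‖ := ξ.le_opNorm z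
      _ ≤ 1 * ‖z‖ := mul_le_mul_of_nonneg_right hξnorm (norm_nonneg _)
      _ = ‖z‖ := one_mul _
  have hpt : ∀ i, (max ((‖f x‖ - ‖f (flip x i)‖) / 2) 0) ^ 2 ≤ (ξ (Di f i x)) ^ 2 := by
    intro i
    have hDi : ξ (Di f i x) = (ξ (f x) - ξ (f (flip x i))) / 2 := by
      unfold Di flip
      rw [map_smul, map_sub]
      simp [smul_eq_mul]
      ring
    have h1 : ξ (f (flip x i)) ≤ ‖f (flip x i)‖ :=
      le_trans (le_abs_self _) (hξabs _)
    have h2 : (‖f x‖ - ‖f (flip x i)‖) / 2 ≤ ξ (Di f i x) := by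
      rw [hDi, hξval]
      linarith
    have h3 : max ((‖f x‖ - ‖f (flip x i)‖) / 2) 0 ≤ |ξ (Di f i x)| :=
      max_le (le_trans h2 (le_abs_self _)) (abs_nonneg _)
    calc (max ((‖f x‖ - ‖f (flip x i)‖) / 2) 0) ^ 2 ≤ |ξ (Di f i x)| ^ 2 :=
        pow_le_pow_left₀ (le_max_right _ 0) h3 2
      _ = (ξ (Di f i x)) ^ 2 := sq_abs _
  have hbound : ∀ δ : Cube n,
      (∑ i, sgn (δ i) * ξ (Di f i x)) ^ 2 ≤ ‖∑ i, sgn (δ i) • Di f i x‖ ^ 2 := by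
    intro δ
    have hlin : ∑ i, sgn (δ i) * ξ (Di f i x) = ξ (∑ i, sgn (δ i) • Di f i x) := by
      rw [map_sum]
      apply Finset.sum_congr rfl
      intro i _
      rw [map_smul, smul_eq_mul]
    rw [hlin]
    calc (ξ (∑ i, sgn (δ i) • Di f i x)) ^ 2 = |ξ (∑ i, sgn (δ i) • Di f i x)| ^ 2 :=
        (sq_abs _).symm
      _ ≤ ‖∑ i, sgn (δ i) • Di f i x‖ ^ 2 :=
        pow_le_pow_left₀ (abs_nonneg _) (hξabs _) 2
  calc ∑ i : Fin n, (max ((‖f x‖ - ‖f (flip x i)‖) / 2) 0) ^ 2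
      ≤ ∑ i, (ξ (Di f i x)) ^ 2 := Finset.sum_le_sum fun i _ => hpt i
    _ = expect (fun δ : Cube n => (∑ i, sgn (δ i) * ξ (Di f i x)) ^ 2) :=
        (expect_sq_sum_sgn _).symm
    _ ≤ expect (fun δ : Cube n => ‖∑ i, sgn (δ i) • Di f i x‖ ^ 2) := expect_mono hbound
    _ ≤ 1 := hLip

/-- the core entropy bound -/
lemma core {n : ℕ} (φ : Cube n → ℝ) (p : ℝ) (hp : 2 ≤ p) (hφ : ∀ x, 0 ≤ φ x)
    (h2 : ∀ x, ∑ i : Fin n, (max ((φ x - φ (flip x i)) / 2) 0) ^ 2 ≤ 1) :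
    expect (fun x => φ x ^ p * Real.log (φ x ^ p))
      - expect (fun x => φ x ^ p) * Real.log (expect (fun x => φ x ^ p))
      ≤ p ^ 2 * expect (fun x => φ x ^ (p - 2)) := by
  have hT := entropy_le_sum (fun x => φ x ^ p) (fun x => Real.rpow_nonneg (hφ x) p)
  set P : Cube n → Fin n → ℝ :=
    fun x i => φ x ^ (p - 2) * (max ((φ x - φ (flip x i)) / 2) 0) ^ 2 with hP
  have hPnn : ∀ x i, 0 ≤ P x i := by
    intro x i
    have := Real.rpow_nonneg (hφ x) (p - 2)
    positivity
  have hedge : ∀ (x : Cube n) (i : Fin n),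
      ent (φ x ^ p) (φ (flip x i) ^ p) ≤ p ^ 2 / 2 * (P x i + P (flip x i) i) := by
    intro x i
    rcases le_total (φ (flip x i)) (φ x) with hc | hc
    · have hb := ent_rpow_le hp (hφ (flip x i)) hc
      have hmax : max ((φ x - φ (flip x i)) / 2) 0 = (φ x - φ (flip x i)) / 2 :=
        max_eq_left (by linarith)
      have : P x i = φ x ^ (p - 2) * ((φ x - φ (flip x i)) / 2) ^ 2 := by
        rw [hP]; simp only; rw [hmax]
      rw [this] at *
      have := hPnn (flip x i) i
      nlinarith [hb]
    · have hb := ent_rpow_le hp (hφ x) hc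
      rw [ent_comm]
      have hmax : max ((φ (flip x i) - φ x) / 2) 0 = (φ (flip x i) - φ x) / 2 :=
        max_eq_left (by linarith)
      have hre : P (flip x i) i = φ (flip x i) ^ (p - 2) * ((φ (flip x i) - φ x) / 2) ^ 2 := by
        rw [hP]; simp only; rw [flip_flip, hmax]
      have := hPnn x i
      nlinarith [hb, hre.ge, hre.le]
  calc expect (fun x => φ x ^ p * Real.log (φ x ^ p))
      - expect (fun x => φ x ^ p) * Real.log (expect (fun x => φ x ^ p))
      ≤ ∑ i : Fin n, expect (fun x => ent (φ x ^ p) (φ (flip x i) ^ p)) := hT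
    _ ≤ ∑ i : Fin n, expect (fun x => p ^ 2 / 2 * (P x i + P (flip x i) i)) :=
        Finset.sum_le_sum fun i _ => expect_mono fun x => hedge x i
    _ = ∑ i : Fin n, (p ^ 2 / 2 * (expect (fun x => P x i) + expect (fun x => P (flip x i) i))) := by
        apply Finset.sum_congr rfl
        intro i _
        rw [expect_const_mul, expect_add]
    _ = ∑ i : Fin n, (p ^ 2 * expect (fun x => P x i)) := by
        apply Finset.sum_congr rfl
        intro i _
        rw [expect_flip (fun x => P x i) i]
        ring
    _ = p ^ 2 * expect (fun x => ∑ i, P x i) := by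
        rw [expect_sum, Finset.mul_sum]
    _ ≤ p ^ 2 * expect (fun x => φ x ^ (p - 2)) := by
        apply mul_le_mul_of_nonneg_left _ (by positivity)
        apply expect_mono
        intro x
        have : ∑ i, P x i = φ x ^ (p - 2) * ∑ i, (max ((φ x - φ (flip x i)) / 2) 0) ^ 2 := by
          rw [hP, Finset.mul_sum]
        rw [this]
        calc φ x ^ (p - 2) * ∑ i, (max ((φ x - φ (flip x i)) / 2) 0) ^ 2
            ≤ φ x ^ (p - 2) * 1 :=
              mul_le_mul_of_nonneg_left (h2 x) (Real.rpow_nonneg (hφ x) _)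
          _ = φ x ^ (p - 2) := mul_one _

end EMB
namespace EMB

lemma expect_eq_weighted {n : ℕ} (f : Cube n → ℝ) :
    expect f = ∑ x : Cube n, ((2:ℝ) ^ n)⁻¹ * f x := by
  unfold expect
  rw [div_eq_mul_inv, mul_comm, Finset.mul_sum]

lemma sum_weights (n : ℕ) : ∑ _x : Cube n, ((2:ℝ) ^ n)⁻¹ = 1 := by
  rw [Finset.sum_const]
  simp only [Finset.card_univ, Fintype.card_fun, Fintype.card_bool, Fintype.card_fin,
    nsmul_eq_mul]
  push_cast
  field_simp

/-- power mean inequality step -/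
lemma holder_step {n : ℕ} (φ : Cube n → ℝ) (p : ℝ) (hp : 2 ≤ p) (hφ : ∀ x, 0 ≤ φ x) :
    expect (fun x => φ x ^ (p - 2)) ≤ (expect fun x => φ x ^ p) ^ (1 - 2 / p) := by
  rcases eq_or_lt_of_le hp with hp2 | hplt
  · subst hp2
    simp only [show (2:ℝ) - 2 = 0 from by norm_num, show 1 - 2/(2:ℝ) = 0 from by norm_num,
      Real.rpow_zero]
    rw [expect_const]
  · have hps : 0 < p - 2 := by linarith
    have hpp : 0 < p := by linarith
    set r : ℝ := p / (p - 2) with hr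
    have hr1 : 1 ≤ r := by
      rw [hr, le_div_iff₀ hps]
      linarith
    have hmul : (p - 2) * r = p := by
      rw [hr]
      field_simp
    have h1r : 1 / r = 1 - 2 / p := by
      rw [hr]
      rw [one_div_div]
      field_simp
    have key := Real.arith_mean_le_rpow_mean (s := Finset.univ)
      (w := fun _ : Cube n => ((2:ℝ) ^ n)⁻¹) (z := fun x => φ x ^ (p - 2))
      (p := r) (fun i _ => by positivity) (sum_weights n)
      (fun i _ => Real.rpow_nonneg (hφ i) _) hr1
    have hzr : ∀ x : Cube n, (φ x ^ (p - 2)) ^ r = φ x ^ p := by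
      intro x
      rw [← Real.rpow_mul (hφ x), hmul]
    calc expect (fun x => φ x ^ (p - 2))
        = ∑ x : Cube n, ((2:ℝ) ^ n)⁻¹ * φ x ^ (p - 2) := expect_eq_weighted _
      _ ≤ (∑ x : Cube n, ((2:ℝ) ^ n)⁻¹ * (φ x ^ (p - 2)) ^ r) ^ (1 / r) := key
      _ = (expect fun x => φ x ^ p) ^ (1 - 2 / p) := by
          rw [← h1r]
          congr 1
          rw [expect_eq_weighted]
          apply Finset.sum_congr rfl
          intro x _
          rw [hzr x]

end EMB

/-- For a normed space `E`, `p ≥ 2`, and `f : Ω₂ⁿ → E` satisfying the Lipschitz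
condition `P²(f) ≤ 1`: if `𝔼‖f‖^p > 0`, then
`𝔼[‖f‖^p (log ‖f‖^p − log 𝔼‖f‖^p)] ≤ p²·(𝔼‖f‖^p)^{1−2/p}`. -/
theorem entropy_moment_bound {E : Type*} [NormedAddCommGroup E]
    [NormedSpace ℝ E] {n : ℕ} (f : Cube n → E) (p : ℝ) (hp : 2 ≤ p)
    (hLip : ∀ x : Cube n,
      expect (fun δ : Cube n => ‖∑ i, sgn (δ i) • Di f i x‖ ^ 2) ≤ 1)
    (hpos : 0 < expect (fun x => ‖f x‖ ^ p)) :
    expect (fun x => ‖f x‖ ^ p *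
        (Real.log (‖f x‖ ^ p) - Real.log (expect (fun y => ‖f y‖ ^ p)))) ≤
      p ^ 2 * (expect (fun x => ‖f x‖ ^ p)) ^ (1 - 2 / p) := by
  have hφ : ∀ x : Cube n, 0 ≤ ‖f x‖ := fun x => norm_nonneg _
  have h2 : ∀ x : Cube n,
      ∑ i : Fin n, (max ((‖f x‖ - ‖f (EMB.flip x i)‖) / 2) 0) ^ 2 ≤ 1 :=
    fun x => EMB.grad_bound f x (hLip x)
  have hcore := EMB.core (fun x => ‖f x‖) p hp hφ h2
  have hhold := EMB.holder_step (fun x => ‖f x‖) p hp hφ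
  have hLHS : expect (fun x => ‖f x‖ ^ p *
        (Real.log (‖f x‖ ^ p) - Real.log (expect (fun y => ‖f y‖ ^ p))))
      = expect (fun x => ‖f x‖ ^ p * Real.log (‖f x‖ ^ p))
        - expect (fun x => ‖f x‖ ^ p) * Real.log (expect (fun y => ‖f y‖ ^ p)) := by
    have hfun : (fun x => ‖f x‖ ^ p *
        (Real.log (‖f x‖ ^ p) - Real.log (expect (fun y => ‖f y‖ ^ p))))
        = fun x => ‖f x‖ ^ p * Real.log (‖f x‖ ^ p)
            - ‖f x‖ ^ p * Real.log (expect (fun y => ‖f y‖ ^ p)) := by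
      funext x
      ring
    rw [hfun, EMB.expect_sub, EMB.expect_mul_const]
  rw [hLHS]
  calc expect (fun x => ‖f x‖ ^ p * Real.log (‖f x‖ ^ p))
        - expect (fun x => ‖f x‖ ^ p) * Real.log (expect (fun y => ‖f y‖ ^ p))
      ≤ p ^ 2 * expect (fun x => ‖f x‖ ^ (p - 2)) := hcore
    _ ≤ p ^ 2 * (expect (fun x => ‖f x‖ ^ p)) ^ (1 - 2 / p) :=
        mul_le_mul_of_nonneg_left hhold (by positivity)
end
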